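/- For every integer p ≥ 1 and every m ≥ 0, the exponential generating function of the m-th column of the p-th power of the inverse Stirling matrix satisfies, in the ring of formal power series ℝ⟦X⟧: Σ_{n=0}^∞ S^{−p}_{n,m}·X^n/n! = (σ^{−p})^m/m!, where σ^{−p} is the p-fold compositional iterate of log(1+X). -/

import Mathlib

/-- Signed Stirling numbers of the first kind:
`s(0,0) = 1`, `s(n+1,m) = s(n,m-1) - n·s(n,m)`. -/
def s1 : ℕ → ℕ → ℤ
  | 0, 0 => 1
  | 0, _ + 1 => 0
  | n + 1, 0 => -(n : ℤ) * s1 n 0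
  | n + 1, m + 1 => s1 n m - (n : ℤ) * s1 n (m + 1)

/-- Entries `S^{-p}_{n,m}` of the `p`-th power of the inverse Stirling matrix
(for `p ≥ 1`; the value at `p = 0` is junk). -/
def Snp : ℕ → ℕ → ℕ → ℤ
  | 0, _, _ => 0
  | 1, n, m => s1 n m
  | p + 2, n, m => ∑ k ∈ Finset.range (n + 1), s1 n k * Snp (p + 1) k m

/-- Composition `f ∘ g` of formal power series (the intended meaning when `g` has zero
constant term, in which case `coeff n (g ^ k) = 0` for `k > n`). -/
noncomputable def PSComp (f g : PowerSeries ℝ) : PowerSeries ℝ :=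
  PowerSeries.mk fun n =>
    ∑ k ∈ Finset.range (n + 1), (PowerSeries.coeff (R := ℝ) k f) * (PowerSeries.coeff (R := ℝ) n (g ^ k))

/-- `log(1+X) = ∑_{n ≥ 1} (-1)^{n+1} X^n / n` as a formal power series over `ℝ`. -/
noncomputable def logOnePlusX : PowerSeries ℝ :=
  PowerSeries.mk fun n => if n = 0 then 0 else (-1 : ℝ) ^ (n + 1) / n

/-- `σ^{-p}`, the `p`-fold compositional iterate of `log(1+X)` (with `σ^0 = X`). -/
noncomputable def sigmaNP : ℕ → PowerSeries ℝ
  | 0 => PowerSeries.X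
  | p + 1 => PSComp (sigmaNP p) logOnePlusX

/-!
Composition with a series of zero constant term is `PowerSeries.subst`, a ring homomorphism, so
`(σ^{-(p+1)})^m` is `(σ^{-p})^m` composed with `L = log(1+X)`. Comparing coefficients, the EGF
identity for `p + 1` reduces to the one for `p` and to the case `p = 1`:
`n! [Xⁿ] Lᵐ = m! s(n,m)`. The latter follows from `(1+X) L' = 1`, which turns
`(1+X) (L^{m+1})' = (m+1) Lᵐ` into the defining recurrence of `s`.
-/

open PowerSeries

open scoped Nat

theorem PowerSeries.coeff_pow_eq_zero_of_lt {R : Type*} [CommSemiring R] {g : R⟦X⟧}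
    (hg : constantCoeff g = 0) {k n : ℕ} (h : n < k) : coeff n (g ^ k) = 0 :=
  coeff_of_lt_order n ((Nat.cast_lt.2 h).trans_le (le_order_pow_of_constantCoeff_eq_zero k hg))

theorem PowerSeries.coeff_subst_of_constantCoeff_eq_zero {R : Type*} [CommRing R] (f : R⟦X⟧)
    {g : R⟦X⟧} (hg : constantCoeff g = 0) (n : ℕ) :
    coeff n (f.subst g) = ∑ k ∈ Finset.range (n + 1), coeff k f * coeff n (g ^ k) := by
  rw [coeff_subst' (HasSubst.of_constantCoeff_zero' hg),
    finsum_eq_sum_of_support_subset (s := Finset.range (n + 1))]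
  · simp only [smul_eq_mul]
  · intro k hk
    by_contra hkn
    exact hk (by simp only [coeff_pow_eq_zero_of_lt hg (by simpa using hkn), smul_zero])

theorem PSComp_eq_subst (f : ℝ⟦X⟧) {g : ℝ⟦X⟧} (hg : constantCoeff g = 0) :
    PSComp f g = f.subst g := by
  ext n
  rw [coeff_subst_of_constantCoeff_eq_zero f hg, PSComp, coeff_mk]

theorem logOnePlusX_eq_log : logOnePlusX = log ℝ := by
  ext n
  simp [logOnePlusX]

theorem sigmaNP_succ (p : ℕ) : sigmaNP (p + 1) = (sigmaNP p).subst (log ℝ) := by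
  rw [sigmaNP, logOnePlusX_eq_log, PSComp_eq_subst _ constantCoeff_log]

theorem sigmaNP_one : sigmaNP 1 = log ℝ := by
  rw [sigmaNP_succ, sigmaNP, subst_X HasSubst.log]

theorem s1_succ_zero (n : ℕ) : s1 (n + 1) 0 = 0 := by
  induction n with
  | zero => rfl
  | succ n ih => rw [s1, ih, mul_zero]

section Log

variable {A : Type*} [CommRing A]

theorem PowerSeries.coeff_X_mul_derivative (f : A⟦X⟧) (n : ℕ) :
    coeff n (X * d⁄dX A f) = n * coeff n f := by
  cases n with
  | zero => simp
  | succ n =>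
    rw [coeff_succ_X_mul, coeff_derivative, mul_comm]
    push_cast
    rfl

variable [Algebra ℚ A]

theorem PowerSeries.one_add_X_mul_derivative_log : (1 + X) * d⁄dX A (log A) = 1 := by
  ext n
  cases n with
  | zero => simp [deriv_log]
  | succ n => simp [deriv_log, add_mul, coeff_succ_X_mul, coeff_one, pow_succ]

/-- Coefficientwise form of `(1 + X) · (L ^ (m + 1))' = (m + 1) · L ^ m` for `L = log (1 + X)`. -/
theorem PowerSeries.coeff_log_pow_succ_recurrence (m n : ℕ) :
    (n + 1) * coeff (n + 1) (log A ^ (m + 1)) + n * coeff n (log A ^ (m + 1)) =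
      (m + 1) * coeff n (log A ^ m) := by
  have hdiff : (1 + X) * d⁄dX A (log A ^ (m + 1)) = C ((m : A) + 1) * log A ^ m := by
    rw [derivative_pow, add_tsub_cancel_right, map_add, map_natCast, map_one, Nat.cast_succ]
    linear_combination ((m : A⟦X⟧) + 1) * log A ^ m * one_add_X_mul_derivative_log (A := A)
  have := congrArg (coeff n) hdiff
  rw [add_mul, one_mul, map_add, coeff_derivative, coeff_X_mul_derivative, coeff_C_mul] at this
  linear_combination this

theorem factorial_mul_coeff_log_pow (m n : ℕ) :
    n ! * coeff n (log A ^ m) = m ! * (s1 n m : A) := by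
  induction m generalizing n with
  | zero => cases n <;> simp [coeff_one, s1.eq_1, s1_succ_zero]
  | succ m ihm =>
    induction n with
    | zero => simp [coeff_zero_eq_constantCoeff, s1]
    | succ n ihn =>
      have hrec := coeff_log_pow_succ_recurrence (A := A) m n
      simp only [s1, Nat.factorial_succ, Int.cast_sub, Int.cast_mul, Int.cast_natCast,
        Nat.cast_mul, Nat.cast_succ] at ihn ⊢
      linear_combination (n ! : A) * hrec + (m + 1) * ihm n - n * ihn

end Log

theorem factorial_mul_coeff_sigmaNP_pow (p m n : ℕ) :
    n ! * coeff n (sigmaNP (p + 1) ^ m) = m ! * (Snp (p + 1) n m : ℝ) := by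
  induction p generalizing n with
  | zero => rw [sigmaNP_one, factorial_mul_coeff_log_pow]; rfl
  | succ p ih =>
    rw [sigmaNP_succ, ← subst_pow HasSubst.log,
      coeff_subst_of_constantCoeff_eq_zero _ constantCoeff_log, Snp, Int.cast_sum,
      Finset.mul_sum, Finset.mul_sum]
    refine Finset.sum_congr rfl fun k _ => ?_
    rw [mul_left_comm, factorial_mul_coeff_log_pow, Int.cast_mul]
    linear_combination (s1 n k : ℝ) * ih k

/-- The EGF of the `m`-th column of the `p`-th power of the inverse Stirling matrix is
`(σ^{-p})^m / m!`. -/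
theorem egf_column_inverse_Stirling_power (p m : ℕ) (hp : 1 ≤ p) :
    (PowerSeries.mk fun n => (Snp p n m : ℝ) / n.factorial) =
      PowerSeries.C (R := ℝ) (1 / m.factorial) * (sigmaNP p) ^ m := by
  obtain ⟨p, rfl⟩ := Nat.exists_eq_add_of_le' hp
  ext n
  rw [coeff_mk, coeff_C_mul]
  field_simp
  linear_combination (factorial_mul_coeff_sigmaNP_pow p m n).symm
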